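/- arXiv:1511.07974 — 4 statements merged into one kernel-verified Lean document; each statement's English description precedes it below -/
import Mathlib

section
/- Existence of an equilibrium point (Theorem 1, first part). Suppose there exist x*_i ∈ Ω_i (i = 1,…,n) and λ* ∈ ℝ^m satisfying the KKT conditions: ⟨λ* - ∇f_i(x*_i), y - x*_i⟩ ≤ 0 for all y ∈ Ω_i and all i, and ∑_{i=1}^n x*_i = ∑_{i=1}^n d_i. Then, setting λ*_i = λ* for all i and Λ* = (λ*_1,…,λ*_n), there exists Z* = (z*_1,…,z*_n), z*_i ∈ ℝ^m, such that S* = (X*, Λ*, Z*) is an equilibrium point. -/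
open scoped BigOperators RealInnerProductSpace Matrix

/-! The constant vectors span `ker L̄`, so every row of `L̄` sums to zero and `∑ⱼ L̄ᵢⱼ λ* = 0`.
Since `L̄` is symmetric, its range is the orthogonal complement of its kernel, i.e. the vectors with
zero sum. Coordinatewise, `(dᵢ - x*ᵢ)ᵢ` sums to zero by the KKT balance condition, so it equals
`L̄ Z*` for some `Z*`, which is the remaining equilibrium equation. -/

namespace Matrix

variable {μ ι : Type*} [Fintype ι]

theorem sum_row_eq_zero_of_mulVec_one_eq_zero {A : Matrix μ ι ℝ} (hA : A *ᵥ 1 = 0) (i : μ) :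
    ∑ j, A i j = 0 := by
  simpa [mulVec, dotProduct_one] using congrFun hA i

theorem exists_mulVec_eq_of_dotProduct_eq_zero [Fintype μ] {A : Matrix μ ι ℝ} {b : μ → ℝ}
    (hb : ∀ x, x ᵥ* A = 0 → b ⬝ᵥ x = 0) : ∃ x, A *ᵥ x = b := by
  classical
  have hmem : WithLp.toLp 2 b ∈ (LinearMap.ker Aᵀ.toEuclideanLin)ᗮ := by
    intro x hx
    have hxA : x.ofLp ᵥ* A = 0 := by
      simpa [← mulVec_transpose] using congrArg WithLp.ofLp hx
    simpa [EuclideanSpace.inner_eq_star_dotProduct] using hb _ hxA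
  rw [LinearMap.orthogonal_ker, ← toEuclideanLin_conjTranspose_eq_adjoint,
    conjTranspose_eq_transpose_of_trivial, transpose_transpose] at hmem
  obtain ⟨x, hx⟩ := hmem
  exact ⟨x.ofLp, congrArg WithLp.ofLp hx⟩

theorem IsSymm.exists_mulVec_eq_of_dotProduct_eq_zero {A : Matrix ι ι ℝ} (hA : A.IsSymm)
    {b : ι → ℝ} (hb : ∀ x, A *ᵥ x = 0 → b ⬝ᵥ x = 0) : ∃ x, A *ᵥ x = b :=
  Matrix.exists_mulVec_eq_of_dotProduct_eq_zero fun x hx =>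
    hb x (by rwa [← hA.eq, ← vecMul_transpose, transpose_transpose])

theorem IsSymm.exists_sum_smul_eq {A : Matrix ι ι ℝ} (hA : A.IsSymm)
    (hker : ∀ x, A *ᵥ x = 0 → ∃ c : ℝ, x = fun _ => c) {κ : Type*} [Fintype κ]
    {b : ι → EuclideanSpace ℝ κ} (hb : ∑ i, b i = 0) :
    ∃ z : ι → EuclideanSpace ℝ κ, ∀ i, ∑ j, A i j • z j = b i := by
  have hcoord (k : κ) : ∃ x, A *ᵥ x = fun i => b i k := by
    refine hA.exists_mulVec_eq_of_dotProduct_eq_zero fun x hx => ?_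
    obtain ⟨c, rfl⟩ := hker x hx
    have hbk : ∑ i, b i k = 0 := by simpa using congrArg (· k) hb
    simp [dotProduct, ← Finset.sum_mul, hbk]
  choose x hx using hcoord
  refine ⟨fun j => WithLp.toLp 2 fun k => x k j, fun i => ?_⟩
  ext k
  simpa [mulVec, dotProduct] using congrFun (hx k) i

end Matrix

theorem equilibrium_point_exists_general
    (n m : ℕ)
    (f : Fin n → EuclideanSpace ℝ (Fin m) → ℝ)
    (Ω : Fin n → Set (EuclideanSpace ℝ (Fin m)))
    (d : Fin n → EuclideanSpace ℝ (Fin m))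
    (Lbar : Matrix (Fin n) (Fin n) ℝ) (hsym : Lbar.IsSymm)
    (hker : ∀ x : Fin n → ℝ, Lbar.mulVec x = 0 ↔ ∃ c : ℝ, x = fun _ => c)
    -- the KKT point
    (xs : Fin n → EuclideanSpace ℝ (Fin m)) (lam : EuclideanSpace ℝ (Fin m))
    (hxs_mem : ∀ i, xs i ∈ Ω i)
    (hkkt : ∀ i, ∀ y ∈ Ω i, ⟪lam - gradient (f i) (xs i), y - xs i⟫ ≤ 0)
    (hsum : ∑ i, xs i = ∑ i, d i) :
    ∃ zs : Fin n → EuclideanSpace ℝ (Fin m),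
      ∀ i, xs i ∈ Ω i
        ∧ (∀ y ∈ Ω i, ⟪lam - gradient (f i) (xs i), y - xs i⟫ ≤ 0)
        ∧ (∑ j, Lbar i j • (lam + zs j) = d i - xs i)
        ∧ (∑ j, Lbar i j • lam = 0) := by
  have hrow : ∀ i, ∑ j, Lbar i j = 0 :=
    Matrix.sum_row_eq_zero_of_mulVec_one_eq_zero ((hker 1).2 ⟨1, rfl⟩)
  have hlam (i : Fin n) : ∑ j, Lbar i j • lam = 0 := by
    rw [← Finset.sum_smul, hrow i, zero_smul]
  have hbalance : ∑ i, (d i - xs i) = 0 := by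
    rw [Finset.sum_sub_distrib, hsum, sub_self]
  obtain ⟨zs, hzs⟩ := hsym.exists_sum_smul_eq (fun x => (hker x).1) hbalance
  refine ⟨zs, fun i => ⟨hxs_mem i, hkkt i, ?_, hlam i⟩⟩
  simp only [smul_add, Finset.sum_add_distrib, hlam i, zero_add, hzs i]

/-- **Existence of an equilibrium point** (Theorem 1, first part).
Suppose `x*ᵢ ∈ Ωᵢ` and `λ* ∈ ℝ^m` satisfy the KKT conditions
`⟪λ* - ∇fᵢ(x*ᵢ), y - x*ᵢ⟫ ≤ 0` for all `y ∈ Ωᵢ` and `∑ x*ᵢ = ∑ dᵢ`.  Then, taking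
`λ*ᵢ = λ*` for all `i`, there exists `Z* = (z*₁,…,z*ₙ)` such that `(X*, Λ*, Z*)` is an
equilibrium point, i.e. for every `i`: `x*ᵢ ∈ Ωᵢ`, the normal-cone inequality holds,
`∑ⱼ L̄ᵢⱼ (λ* + z*ⱼ) = dᵢ - x*ᵢ`, and `∑ⱼ L̄ᵢⱼ λ* = 0`. -/
theorem equilibrium_point_exists
    (n m : ℕ) (hn : 0 < n)
    (f : Fin n → EuclideanSpace ℝ (Fin m) → ℝ)
    (hconv : ∀ i, ConvexOn ℝ Set.univ (f i))
    (hdiff : ∀ i, Differentiable ℝ (f i))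
    (Ω : Fin n → Set (EuclideanSpace ℝ (Fin m)))
    (hΩne : ∀ i, (Ω i).Nonempty) (hΩcl : ∀ i, IsClosed (Ω i))
    (hΩconv : ∀ i, Convex ℝ (Ω i))
    (d : Fin n → EuclideanSpace ℝ (Fin m))
    (Lbar : Matrix (Fin n) (Fin n) ℝ) (hsym : Lbar.IsSymm)
    (hker : ∀ x : Fin n → ℝ, Lbar.mulVec x = 0 ↔ ∃ c : ℝ, x = fun _ => c)
    -- the KKT point
    (xs : Fin n → EuclideanSpace ℝ (Fin m)) (lam : EuclideanSpace ℝ (Fin m))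
    (hxs_mem : ∀ i, xs i ∈ Ω i)
    (hkkt : ∀ i, ∀ y ∈ Ω i, ⟪lam - gradient (f i) (xs i), y - xs i⟫ ≤ 0)
    (hsum : ∑ i, xs i = ∑ i, d i) :
    ∃ zs : Fin n → EuclideanSpace ℝ (Fin m),
      ∀ i, xs i ∈ Ω i
        ∧ (∀ y ∈ Ω i, ⟪lam - gradient (f i) (xs i), y - xs i⟫ ≤ 0)
        ∧ (∑ j, Lbar i j • (lam + zs j) = d i - xs i)
        ∧ (∑ j, Lbar i j • lam = 0) :=
  equilibrium_point_exists_general n m f Ω d Lbar hsym hker xs lam hxs_mem hkkt hsum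
end

section
/- Equilibria yield the optimal allocation (Theorem 1, second part). Assume each f_i is strictly convex. If S* = (X*,Λ*,Z*) is an equilibrium point, then X* = (x*_1,…,x*_n) is feasible and is the optimal solution of the resource allocation problem: ∑_{i=1}^n f_i(x*_i) ≤ ∑_{i=1}^n f_i(x_i) for every feasible X = (x_1,…,x_n), with strict inequality whenever X ≠ X*. -/
open scoped BigOperators RealInnerProductSpace

private lemma grad_ineq' {m : ℕ} {f : EuclideanSpace ℝ (Fin m) → ℝ}
    (hd : Differentiable ℝ f) (hc : ConvexOn ℝ Set.univ f)
    (a b : EuclideanSpace ℝ (Fin m)) :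
    ⟪gradient f a, b - a⟫ ≤ f b - f a := by
  set L : ℝ →ᵃ[ℝ] EuclideanSpace ℝ (Fin m) := AffineMap.lineMap a b with hL
  have hL0 : L 0 = a := AffineMap.lineMap_apply_zero a b
  have hL1 : L 1 = b := AffineMap.lineMap_apply_one a b
  have hgc : ConvexOn ℝ Set.univ (f ∘ L) := by
    simpa using hc.comp_affineMap L
  have hline : HasDerivAt (fun t : ℝ => L t) (b - a) 0 := by
    have h1 : HasDerivAt (fun t : ℝ => t • (b - a) + a) ((1:ℝ) • (b - a)) 0 :=
      ((hasDerivAt_id (0:ℝ)).smul_const (b - a)).add_const a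
    simp only [one_smul] at h1
    have hfe : (fun t : ℝ => L t) = fun t : ℝ => t • (b - a) + a := by
      funext t
      simp [hL, AffineMap.lineMap_apply, vsub_eq_sub, vadd_eq_add]
    rw [hfe]; exact h1
  have hF : HasFDerivAt f (InnerProductSpace.toDual ℝ _ (gradient f a)) (L 0) := by
    rw [hL0]; exact (hd a).hasGradientAt.hasFDerivAt
  have hcomp : HasDerivAt (f ∘ L) (⟪gradient f a, b - a⟫) 0 := by
    have := hF.comp_hasDerivAt 0 hline
    simpa [InnerProductSpace.toDual_apply_apply] using this
  have := hgc.le_slope_of_hasDerivAt (Set.mem_univ (0:ℝ)) (Set.mem_univ (1:ℝ))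
    zero_lt_one hcomp
  simpa [slope, hL0, hL1] using this


/-- **Equilibria yield the optimal allocation** (Theorem 1, second part).
Assume each `fᵢ` is strictly convex.  If `S* = (X*,Λ*,Z*)` is an equilibrium point, then
`X*` is feasible and optimal for the resource allocation problem: for every feasible
`X = (x₁,…,xₙ)` one has `∑ fᵢ(x*ᵢ) ≤ ∑ fᵢ(xᵢ)`, with strict inequality when `X ≠ X*`. -/
theorem equilibrium_is_optimal
    (n m : ℕ) (hn : 0 < n)
    (f : Fin n → EuclideanSpace ℝ (Fin m) → ℝ)
    (hdiff : ∀ i, Differentiable ℝ (f i))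
    (hsconv : ∀ i, StrictConvexOn ℝ Set.univ (f i))
    (Ω : Fin n → Set (EuclideanSpace ℝ (Fin m)))
    (hΩne : ∀ i, (Ω i).Nonempty) (hΩcl : ∀ i, IsClosed (Ω i))
    (hΩconv : ∀ i, Convex ℝ (Ω i))
    (d : Fin n → EuclideanSpace ℝ (Fin m))
    (Lbar : Matrix (Fin n) (Fin n) ℝ) (hsym : Lbar.IsSymm)
    (hker : ∀ x : Fin n → ℝ, Lbar.mulVec x = 0 ↔ ∃ c : ℝ, x = fun _ => c)
    -- the equilibrium point S* = (X*, Λ*, Z*)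
    (xs lams zs : Fin n → EuclideanSpace ℝ (Fin m))
    (heq_mem : ∀ i, xs i ∈ Ω i)
    (heq_nc : ∀ i, ∀ y ∈ Ω i, ⟪lams i - gradient (f i) (xs i), y - xs i⟫ ≤ 0)
    (heq_lam : ∀ i, ∑ j, Lbar i j • (lams j + zs j) = d i - xs i)
    (heq_z : ∀ i, ∑ j, Lbar i j • lams j = 0) :
    (∑ i, xs i = ∑ i, d i)
    ∧ (∀ i, xs i ∈ Ω i)
    ∧ ∀ x : Fin n → EuclideanSpace ℝ (Fin m),
        (∀ i, x i ∈ Ω i) → (∑ i, x i = ∑ i, d i) →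
          (∑ i, f i (xs i) ≤ ∑ i, f i (x i))
          ∧ (x ≠ xs → ∑ i, f i (xs i) < ∑ i, f i (x i)) := by
  classical
  -- column sums of Lbar are zero
  have hones : Lbar.mulVec (fun _ => (1:ℝ)) = 0 := (hker _).mpr ⟨1, rfl⟩
  have hcol : ∀ j, ∑ i, Lbar i j = 0 := by
    intro j
    have h1 : Lbar.mulVec (fun _ => (1:ℝ)) j = 0 := by rw [hones]; rfl
    simp only [Matrix.mulVec, dotProduct, mul_one] at h1
    calc ∑ i, Lbar i j = ∑ i, Lbar j i :=
          Finset.sum_congr rfl fun i _ => (hsym.apply j i).symm ▸ rfl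
      _ = 0 := h1
  -- feasibility
  have hfeas : ∑ i, xs i = ∑ i, d i := by
    have hsum : ∑ i, (d i - xs i) = (0 : EuclideanSpace ℝ (Fin m)) := by
      calc ∑ i, (d i - xs i) = ∑ i, ∑ j, Lbar i j • (lams j + zs j) :=
            Finset.sum_congr rfl fun i _ => (heq_lam i).symm
        _ = ∑ j, ∑ i, Lbar i j • (lams j + zs j) := Finset.sum_comm
        _ = ∑ j, (∑ i, Lbar i j) • (lams j + zs j) := by
            refine Finset.sum_congr rfl fun j _ => ?_
            rw [Finset.sum_smul]
        _ = 0 := by simp [hcol]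
    rw [Finset.sum_sub_distrib, sub_eq_zero] at hsum
    exact hsum.symm
  -- the multipliers are all equal
  have hlamconst : ∀ i j : Fin n, lams i = lams j := by
    intro i j
    apply ext_inner_right ℝ
    intro u
    have hk : Lbar.mulVec (fun k => ⟪lams k, u⟫) = 0 := by
      funext i0
      have : ∑ k, Lbar i0 k * ⟪lams k, u⟫ = ⟪∑ k, Lbar i0 k • lams k, u⟫ := by
        rw [sum_inner]
        exact Finset.sum_congr rfl fun k _ => (real_inner_smul_left _ _ _).symm
      simp only [Matrix.mulVec, dotProduct, Pi.zero_apply]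
      rw [this, heq_z i0, inner_zero_left]
    obtain ⟨c, hc⟩ := (hker _).mp hk
    have hi := congrFun hc i
    have hj := congrFun hc j
    rw [hi, hj]
  set i₀ : Fin n := ⟨0, hn⟩ with hi₀
  -- weak optimality
  have hweak : ∀ x : Fin n → EuclideanSpace ℝ (Fin m), (∀ i, x i ∈ Ω i) →
      (∑ i, x i = ∑ i, d i) → ∑ i, f i (xs i) ≤ ∑ i, f i (x i) := by
    intro x hxΩ hxsum
    have key : ∀ i, ⟪lams i₀, x i - xs i⟫ ≤ f i (x i) - f i (xs i) := by
      intro i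
      have h1 := grad_ineq' (hdiff i) (hsconv i).convexOn (xs i) (x i)
      have h2 := heq_nc i (x i) (hxΩ i)
      rw [inner_sub_left] at h2
      rw [hlamconst i₀ i]
      linarith
    have hsum0 : ∑ i, ⟪lams i₀, x i - xs i⟫ = 0 := by
      rw [← inner_sum]
      have : ∑ i, (x i - xs i) = (0 : EuclideanSpace ℝ (Fin m)) := by
        rw [Finset.sum_sub_distrib, hxsum, hfeas, sub_self]
      rw [this, inner_zero_right]
    have hle := Finset.sum_le_sum (s := Finset.univ) (fun i _ => key i)
    rw [hsum0, Finset.sum_sub_distrib] at hle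
    linarith
  refine ⟨hfeas, heq_mem, fun x hxΩ hxsum => ⟨hweak x hxΩ hxsum, fun hne => ?_⟩⟩
  obtain ⟨j₀, hj₀⟩ : ∃ i, x i ≠ xs i := by
    by_contra h; push_neg at h; exact hne (funext h)
  set w : Fin n → EuclideanSpace ℝ (Fin m) :=
    fun i => (1/2 : ℝ) • x i + (1/2 : ℝ) • xs i with hw
  have hwΩ : ∀ i, w i ∈ Ω i := fun i =>
    (hΩconv i) (hxΩ i) (heq_mem i) (by norm_num) (by norm_num) (by norm_num)
  have hwsum : ∑ i, w i = ∑ i, d i := by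
    rw [hw]
    rw [Finset.sum_add_distrib, ← Finset.smul_sum, ← Finset.smul_sum, hxsum, hfeas,
      ← add_smul]
    norm_num
  have h1 := hweak w hwΩ hwsum
  have h2 : ∑ i, f i (w i) < ∑ i, ((1/2 : ℝ) * f i (x i) + (1/2 : ℝ) * f i (xs i)) := by
    apply Finset.sum_lt_sum
    · intro i _
      have := (hsconv i).convexOn.2 (Set.mem_univ (x i)) (Set.mem_univ (xs i))
        (by norm_num : (0:ℝ) ≤ 1/2) (by norm_num : (0:ℝ) ≤ 1/2) (by norm_num)
      simpa [hw, smul_eq_mul] using this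
    · refine ⟨j₀, Finset.mem_univ j₀, ?_⟩
      have := (hsconv j₀).2 (Set.mem_univ (x j₀)) (Set.mem_univ (xs j₀)) hj₀
        (by norm_num : (0:ℝ) < 1/2) (by norm_num : (0:ℝ) < 1/2) (by norm_num)
      simpa [hw, smul_eq_mul] using this
  rw [Finset.sum_add_distrib, ← Finset.mul_sum, ← Finset.mul_sum] at h2
  linarith
end

section
/- Monotone dissipativity of J (used in Lemmas 1 and 3). Assume each f_i is convex and L̄ is symmetric positive semidefinite. If S* = (X*,Λ*,Z*) is an equilibrium point, then ⟨S - S*, J(S)⟩ ≤ 0 for every triple S = (X,Λ,Z) with x_i ∈ Ω_i for all i. -/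
open scoped BigOperators RealInnerProductSpace

/-!
Write `a = Λ - Λ*` and `b = Z - Z*`. By the equilibrium equations the `Λ`-block of `J(S)` is
`-(X - X*) - L̄a - L̄b` and the `Z`-block is `L̄a`. Since `L̄` is symmetric the two `⟨a, L̄b⟩`
cross terms cancel, and `⟨S - S*, J(S)⟩ = ∑ᵢ ⟨xᵢ - x*ᵢ, λ*ᵢ - ∇fᵢ(xᵢ)⟩ - ⟨a, L̄a⟩`.
Each summand of the first sum is `≤ 0` by the variational inequality at `x*ᵢ` and monotonicity
of `∇fᵢ`; the quadratic term is `≥ 0` because `L̄ ⪰ 0` (the Hadamard product of `L̄` with the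
Gram matrix of `a` is positive semidefinite, by the Schur product theorem).
-/

variable {F : Type*} [NormedAddCommGroup F] [InnerProductSpace ℝ F]

section Gradient

variable [CompleteSpace F] {s : Set F} {f : F → ℝ}

theorem ConvexOn.inner_gradient_le_sub (hf : ConvexOn ℝ s f) {a b : F} (ha : a ∈ s) (hb : b ∈ s)
    (hfa : DifferentiableAt ℝ f a) :
    ⟪gradient f a, b - a⟫ ≤ f b - f a := by
  set γ : ℝ →ᵃ[ℝ] F := AffineMap.lineMap a b
  have hline : HasDerivAt (f ∘ γ) ⟪gradient f a, b - a⟫ 0 := by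
    rw [gradient, InnerProductSpace.toDual_symm_apply]
    have hfγ : HasFDerivAt f (fderiv ℝ f a) (γ 0) := by simpa [γ] using hfa.hasFDerivAt
    exact hfγ.comp_hasDerivAt 0 AffineMap.hasDerivAt_lineMap
  simpa [slope, γ] using (hf.comp_affineMap γ).le_slope_of_hasDerivAt
    (x := 0) (y := 1) (by simpa [γ] using ha) (by simpa [γ] using hb) zero_lt_one hline

theorem ConvexOn.inner_gradient_sub_gradient_nonneg (hf : ConvexOn ℝ s f) {a b : F}
    (ha : a ∈ s) (hb : b ∈ s) (hfa : DifferentiableAt ℝ f a) (hfb : DifferentiableAt ℝ f b) :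
    0 ≤ ⟪gradient f a - gradient f b, a - b⟫ := by
  have hab := hf.inner_gradient_le_sub ha hb hfa
  have hba := hf.inner_gradient_le_sub hb ha hfb
  rw [← neg_sub a b, inner_neg_right] at hab
  rw [inner_sub_left]
  linarith

theorem ConvexOn.inner_sub_gradient_nonpos (hf : ConvexOn ℝ s f) {x y μ : F}
    (hx : x ∈ s) (hy : y ∈ s) (hfx : DifferentiableAt ℝ f x) (hfy : DifferentiableAt ℝ f y)
    (hvi : ⟪μ - gradient f y, x - y⟫ ≤ 0) :
    ⟪x - y, μ - gradient f x⟫ ≤ 0 := by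
  have hmono := hf.inner_gradient_sub_gradient_nonneg hx hy hfx hfy
  rw [real_inner_comm] at hvi hmono
  calc ⟪x - y, μ - gradient f x⟫
      = ⟪x - y, μ - gradient f y⟫ - ⟪x - y, gradient f x - gradient f y⟫ := by
        rw [← inner_sub_right, sub_sub_sub_cancel_right]
    _ ≤ 0 := by linarith

end Gradient

section MatrixAction

variable {ι : Type*} [Fintype ι] {L : Matrix ι ι ℝ}

theorem Matrix.PosSemidef.sum_inner_sum_smul_nonneg (hL : L.PosSemidef) (u : ι → F) :
    0 ≤ ∑ i, ⟪u i, ∑ j, L i j • u j⟫ := by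
  have := (hL.hadamard (Matrix.posSemidef_gram ℝ u)).dotProduct_mulVec_nonneg 1
  simpa [dotProduct, Matrix.mulVec, inner_sum, real_inner_smul_right] using this

theorem Matrix.IsSymm.sum_inner_sum_smul_comm (hL : L.IsSymm) (v w : ι → F) :
    ∑ i, ⟪v i, ∑ j, L i j • w j⟫ = ∑ i, ⟪w i, ∑ j, L i j • v j⟫ := by
  simp only [inner_sum, real_inner_smul_right]
  rw [Finset.sum_comm]
  refine Finset.sum_congr rfl fun i _ => Finset.sum_congr rfl fun j _ => ?_
  rw [hL.apply i j, real_inner_comm]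

theorem Matrix.IsSymm.sum_inner_sub_equilibrium_eq (hL : L.IsSymm)
    (d g x xs lam lams z zs : ι → F)
    (heq_lam : ∀ i, ∑ j, L i j • (lams j + zs j) = d i - xs i)
    (heq_z : ∀ i, ∑ j, L i j • lams j = 0) :
    ∑ i, (⟪x i - xs i, -g i + lam i⟫
        + ⟪lam i - lams i, d i - x i - ∑ j, L i j • (lam j + z j)⟫
        + ⟪z i - zs i, ∑ j, L i j • lam j⟫)
      = ∑ i, ⟪x i - xs i, lams i - g i⟫
        - ∑ i, ⟪lam i - lams i, ∑ j, L i j • (lam j - lams j)⟫ := by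
  set a := fun i => lam i - lams i
  set b := fun i => z i - zs i
  have hΛ : ∀ i, d i - x i - ∑ j, L i j • (lam j + z j)
      = -(x i - xs i) - ∑ j, L i j • a j - ∑ j, L i j • b j := by
    intro i
    rw [← sub_add_cancel (d i) (xs i), ← heq_lam i]
    simp only [a, b, smul_add, smul_sub, Finset.sum_add_distrib, Finset.sum_sub_distrib]
    abel
  have hZ : ∀ i, ∑ j, L i j • lam j = ∑ j, L i j • a j := by
    simp only [a, smul_sub, Finset.sum_sub_distrib, heq_z, sub_zero, implies_true]
  calc _ = ∑ i, ⟪x i - xs i, lams i - g i⟫ - ∑ i, ⟪a i, ∑ j, L i j • a j⟫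
        + (∑ i, ⟪b i, ∑ j, L i j • a j⟫ - ∑ i, ⟪a i, ∑ j, L i j • b j⟫) := by
        simp only [← Finset.sum_sub_distrib, ← Finset.sum_add_distrib, hΛ, hZ]
        refine Finset.sum_congr rfl fun i _ => ?_
        simp only [a, b, inner_add_right, inner_sub_right, inner_neg_right, inner_sub_left]
        linear_combination -real_inner_comm (x i) (lam i) + real_inner_comm (x i) (lams i)
          + real_inner_comm (xs i) (lam i) - real_inner_comm (xs i) (lams i)
    _ = _ := by rw [hL.sum_inner_sum_smul_comm b a, sub_self, add_zero]

end MatrixAction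

theorem monotone_dissipativity_J_general
    (n m : ℕ)
    (f : Fin n → EuclideanSpace ℝ (Fin m) → ℝ)
    (hdiff : ∀ i, Differentiable ℝ (f i))
    (hconv : ∀ i, ConvexOn ℝ Set.univ (f i))
    (Ω : Fin n → Set (EuclideanSpace ℝ (Fin m)))
    (d : Fin n → EuclideanSpace ℝ (Fin m))
    (Lbar : Matrix (Fin n) (Fin n) ℝ) (hpsd : Lbar.PosSemidef)
    -- the equilibrium point S* = (X*, Λ*, Z*)
    (xs lams zs : Fin n → EuclideanSpace ℝ (Fin m))
    (heq_nc : ∀ i, ∀ y ∈ Ω i, ⟪lams i - gradient (f i) (xs i), y - xs i⟫ ≤ 0)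
    (heq_lam : ∀ i, ∑ j, Lbar i j • (lams j + zs j) = d i - xs i)
    (heq_z : ∀ i, ∑ j, Lbar i j • lams j = 0)
    -- an arbitrary triple S = (X, Λ, Z) with xᵢ ∈ Ωᵢ
    (x lam z : Fin n → EuclideanSpace ℝ (Fin m))
    (hx_mem : ∀ i, x i ∈ Ω i) :
    ∑ i, (⟪x i - xs i, -gradient (f i) (x i) + lam i⟫
        + ⟪lam i - lams i, d i - x i - ∑ j, Lbar i j • (lam j + z j)⟫
        + ⟪z i - zs i, ∑ j, Lbar i j • lam j⟫)
      ≤ 0 := by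
  have hsymm : Lbar.IsSymm := by simpa using hpsd.isHermitian
  rw [hsymm.sum_inner_sub_equilibrium_eq d (fun i => gradient (f i) (x i)) x xs lam lams z zs
    heq_lam heq_z]
  have hprimal : ∑ i, ⟪x i - xs i, lams i - gradient (f i) (x i)⟫ ≤ 0 :=
    Finset.sum_nonpos fun i _ => (hconv i).inner_sub_gradient_nonpos (Set.mem_univ _)
      (Set.mem_univ _) (hdiff i _) (hdiff i _) (heq_nc i (x i) (hx_mem i))
  have hdual := hpsd.sum_inner_sum_smul_nonneg fun i => lam i - lams i
  linarith

/-- **Monotone dissipativity of `J`** (used in Lemmas 1 and 3).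
If each `fᵢ` is convex and `L̄` is symmetric positive semidefinite, and
`S* = (X*,Λ*,Z*)` is an equilibrium point, then `⟨S - S*, J(S)⟩ ≤ 0` for every triple
`S = (X,Λ,Z)` with `xᵢ ∈ Ωᵢ`; the inner product `⟨S - S*, J(S)⟩` is written out blockwise. -/
theorem monotone_dissipativity_J
    (n m : ℕ) (hn : 0 < n)
    (f : Fin n → EuclideanSpace ℝ (Fin m) → ℝ)
    (hdiff : ∀ i, Differentiable ℝ (f i))
    (hconv : ∀ i, ConvexOn ℝ Set.univ (f i))
    (Ω : Fin n → Set (EuclideanSpace ℝ (Fin m)))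
    (hΩne : ∀ i, (Ω i).Nonempty) (hΩcl : ∀ i, IsClosed (Ω i))
    (hΩconv : ∀ i, Convex ℝ (Ω i))
    (d : Fin n → EuclideanSpace ℝ (Fin m))
    (Lbar : Matrix (Fin n) (Fin n) ℝ) (hpsd : Lbar.PosSemidef)
    -- the equilibrium point S* = (X*, Λ*, Z*)
    (xs lams zs : Fin n → EuclideanSpace ℝ (Fin m))
    (heq_mem : ∀ i, xs i ∈ Ω i)
    (heq_nc : ∀ i, ∀ y ∈ Ω i, ⟪lams i - gradient (f i) (xs i), y - xs i⟫ ≤ 0)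
    (heq_lam : ∀ i, ∑ j, Lbar i j • (lams j + zs j) = d i - xs i)
    (heq_z : ∀ i, ∑ j, Lbar i j • lams j = 0)
    -- an arbitrary triple S = (X, Λ, Z) with xᵢ ∈ Ωᵢ
    (x lam z : Fin n → EuclideanSpace ℝ (Fin m))
    (hx_mem : ∀ i, x i ∈ Ω i) :
    ∑ i, (⟪x i - xs i, -gradient (f i) (x i) + lam i⟫
        + ⟪lam i - lams i, d i - x i - ∑ j, Lbar i j • (lam j + z j)⟫
        + ⟪z i - zs i, ∑ j, Lbar i j • lam j⟫)
      ≤ 0 :=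
  monotone_dissipativity_J_general n m f hdiff hconv Ω d Lbar hpsd xs lams zs heq_nc heq_lam heq_z x
    lam z hx_mem
end

section
/- Characterization of the zero-dissipation set (LaSalle invariance step in the proof of Lemma 1). Assume each f_i is strictly convex and differentiable, and L̄ is symmetric positive semidefinite. Let S* = (X*,Λ*,Z*) be an equilibrium point and let S = (X,Λ,Z) be a triple with x_i ∈ Ω_i for all i. If ⟨S - S*, J(S)⟩ = 0, then x_i = x*_i for all i and ∑_{j=1}^n L̄_{ij}(λ_j - λ*_j) = 0 for all i. -/
/-!
With `p = Λ - Λ*` and `w = Z - Z*`, the equilibrium equations turn the dissipation into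
`∑ᵢ ⟪λ*ᵢ - ∇fᵢ(x*ᵢ), xᵢ - x*ᵢ⟫ - ∑ᵢ ⟪∇fᵢ(xᵢ) - ∇fᵢ(x*ᵢ), xᵢ - x*ᵢ⟫ - ⟪p, L̄ p⟫`; the cross terms
`⟪p, L̄ w⟫` and `⟪w, L̄ p⟫` cancel because `L̄` is symmetric. The first sum is nonpositive by the
variational inequality at `x*`, the second nonnegative since gradients of convex functions are
monotone, and `⟪p, L̄ p⟫ ≥ 0`. A zero total forces the last two to vanish: strict convexity makes
the gradients strictly monotone, so `x = x*`, and writing `L̄ = Bᵀ B` turns `⟪p, L̄ p⟫ = 0` into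
`B p = 0`, hence `L̄ p = 0`.
-/

open scoped RealInnerProductSpace MatrixOrder Matrix

theorem StrictConvexOn.comp_affineMap_of_injective {E F : Type*} [AddCommGroup E] [Module ℝ E]
    [AddCommGroup F] [Module ℝ F] {f : F → ℝ} {g : E →ᵃ[ℝ] F} (hg : Function.Injective g)
    {s : Set F} (hf : StrictConvexOn ℝ s f) :
    StrictConvexOn ℝ (g ⁻¹' s) (f ∘ g) :=
  ⟨hf.1.affine_preimage _, fun x hx y hy hxy a b ha hb hab =>
    calc
      (f ∘ g) (a • x + b • y) = f (a • g x + b • g y) := by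
        rw [Function.comp_apply, Convex.combo_affine_apply hab]
      _ < a • f (g x) + b • f (g y) := hf.2 hx hy (hg.ne hxy) ha hb hab⟩

theorem StrictConvexOn.fderiv_lt_fderiv {E : Type*} [NormedAddCommGroup E] [NormedSpace ℝ E]
    {f : E → ℝ} {s : Set E} (hf : StrictConvexOn ℝ s f) {a b : E} (ha : a ∈ s) (hb : b ∈ s)
    (hab : a ≠ b) (hfa : DifferentiableAt ℝ f a) (hfb : DifferentiableAt ℝ f b) :
    fderiv ℝ f a (b - a) < fderiv ℝ f b (b - a) := by
  have hline : StrictConvexOn ℝ (AffineMap.lineMap a b ⁻¹' s) (f ∘ AffineMap.lineMap a b) :=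
    hf.comp_affineMap_of_injective (AffineMap.lineMap_injective ℝ hab)
  have h0 : (0 : ℝ) ∈ AffineMap.lineMap a b ⁻¹' s := by simpa using ha
  have h1 : (1 : ℝ) ∈ AffineMap.lineMap a b ⁻¹' s := by simpa using hb
  have hderiv : ∀ t : ℝ, DifferentiableAt ℝ f (AffineMap.lineMap a b t) →
      HasDerivAt (f ∘ AffineMap.lineMap a b) (fderiv ℝ f (AffineMap.lineMap a b t) (b - a)) t :=
    fun t ht => ht.hasFDerivAt.comp_hasDerivAt t AffineMap.hasDerivAt_lineMap
  calc fderiv ℝ f a (b - a)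
      < slope (f ∘ AffineMap.lineMap a b) 0 1 :=
        hline.lt_slope_of_hasDerivAt h0 h1 one_pos (by simpa using hderiv 0 (by simpa using hfa))
    _ < fderiv ℝ f b (b - a) :=
        hline.slope_lt_of_hasDerivAt h0 h1 one_pos (by simpa using hderiv 1 (by simpa using hfb))

theorem StrictConvexOn.inner_gradient_sub_gradient_pos {E : Type*} [NormedAddCommGroup E]
    [InnerProductSpace ℝ E] [CompleteSpace E] {f : E → ℝ} {s : Set E} (hf : StrictConvexOn ℝ s f)
    {a b : E} (ha : a ∈ s) (hb : b ∈ s) (hab : a ≠ b) (hfa : DifferentiableAt ℝ f a)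
    (hfb : DifferentiableAt ℝ f b) :
    0 < ⟪gradient f a - gradient f b, a - b⟫ := by
  have := hf.fderiv_lt_fderiv hb ha hab.symm hfb hfa
  rw [inner_sub_left, inner_gradient_left, inner_gradient_left]
  linarith

section SmulSums

variable {ι κ E : Type*} [Fintype ι] [Fintype κ] [NormedAddCommGroup E] [InnerProductSpace ℝ E]

theorem Matrix.sum_inner_sum_smul_conjTranspose_mul_self (B : Matrix κ ι ℝ) (v : ι → E) :
    ∑ i, ⟪v i, ∑ j, (Bᴴ * B) i j • v j⟫ = ∑ k, ‖∑ j, B k j • v j‖ ^ 2 := by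
  simp only [← real_inner_self_eq_norm_sq, inner_sum, sum_inner, real_inner_smul_right,
    real_inner_smul_left, Matrix.mul_apply, Matrix.conjTranspose_apply, star_trivial,
    Finset.sum_mul]
  conv_lhs => enter [2, i]; rw [Finset.sum_comm]
  rw [Finset.sum_comm]
  refine Finset.sum_congr rfl fun k _ => Finset.sum_congr rfl fun i _ =>
    Finset.sum_congr rfl fun j _ => ?_
  rw [real_inner_comm]
  ring

theorem Matrix.PosSemidef.sum_inner_sum_smul_nonneg_s7 {A : Matrix ι ι ℝ} (hA : A.PosSemidef)
    (v : ι → E) : 0 ≤ ∑ i, ⟪v i, ∑ j, A i j • v j⟫ := by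
  classical
  obtain ⟨B, rfl⟩ := CStarAlgebra.nonneg_iff_eq_star_mul_self.mp hA.nonneg
  rw [Matrix.star_eq_conjTranspose, Matrix.sum_inner_sum_smul_conjTranspose_mul_self]
  positivity

theorem Matrix.PosSemidef.sum_smul_eq_zero_of_sum_inner_sum_smul_eq_zero {A : Matrix ι ι ℝ}
    (hA : A.PosSemidef) {v : ι → E} (hv : ∑ i, ⟪v i, ∑ j, A i j • v j⟫ = 0) (i : ι) :
    ∑ j, A i j • v j = 0 := by
  classical
  obtain ⟨B, rfl⟩ := CStarAlgebra.nonneg_iff_eq_star_mul_self.mp hA.nonneg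
  rw [Matrix.star_eq_conjTranspose, Matrix.sum_inner_sum_smul_conjTranspose_mul_self,
    Finset.sum_eq_zero_iff_of_nonneg fun _ _ => by positivity] at hv
  have hBv : ∀ k, ∑ j, B k j • v j = 0 := fun k => by
    simpa using hv k (Finset.mem_univ k)
  calc ∑ j, (Bᴴ * B) i j • v j = ∑ k, B k i • ∑ j, B k j • v j := by
        simp only [Matrix.mul_apply, Matrix.conjTranspose_apply, star_trivial, Finset.sum_smul,
          Finset.smul_sum, smul_smul]
        exact Finset.sum_comm
    _ = 0 := by simp [hBv]

theorem Matrix.IsHermitian.sum_inner_sum_smul_comm {A : Matrix ι ι ℝ} (hA : A.IsHermitian)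
    (u v : ι → E) :
    ∑ i, ⟪u i, ∑ j, A i j • v j⟫ = ∑ i, ⟪v i, ∑ j, A i j • u j⟫ := by
  simp only [inner_sum, real_inner_smul_right]
  rw [Finset.sum_comm]
  refine Finset.sum_congr rfl fun i _ => Finset.sum_congr rfl fun j _ => ?_
  rw [← hA.apply i j, star_trivial, real_inner_comm]

theorem dissipation_eq_of_equilibrium {A : Matrix ι ι ℝ} (hA : A.IsHermitian)
    {d g xs lams zs x lam z : ι → E}
    (heq_lam : ∀ i, ∑ j, A i j • (lams j + zs j) = d i - xs i)
    (heq_z : ∀ i, ∑ j, A i j • lams j = 0) :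
    ∑ i, (⟪x i - xs i, -g i + lam i⟫
        + ⟪lam i - lams i, d i - x i - ∑ j, A i j • (lam j + z j)⟫
        + ⟪z i - zs i, ∑ j, A i j • lam j⟫)
      = ∑ i, ⟪lams i - g i, x i - xs i⟫
        - ∑ i, ⟪lam i - lams i, ∑ j, A i j • (lam j - lams j)⟫ := by
  have hΛ : ∀ i, d i - x i - ∑ j, A i j • (lam j + z j) = -(x i - xs i)
      - (∑ j, A i j • (lam j - lams j) + ∑ j, A i j • (z j - zs j)) := fun i => by
    rw [sub_eq_iff_eq_add.mp (heq_lam i).symm]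
    simp only [smul_add, smul_sub, Finset.sum_add_distrib, Finset.sum_sub_distrib]
    abel
  have hZ : ∀ i, ∑ j, A i j • lam j = ∑ j, A i j • (lam j - lams j) := fun i => by
    simp only [smul_sub, Finset.sum_sub_distrib, heq_z i, sub_zero]
  have hcross := hA.sum_inner_sum_smul_comm (fun i => lam i - lams i) (fun i => z i - zs i)
  calc _ = ∑ i, (⟪lams i - g i, x i - xs i⟫
          - ⟪lam i - lams i, ∑ j, A i j • (lam j - lams j)⟫
          - ⟪lam i - lams i, ∑ j, A i j • (z j - zs j)⟫
          + ⟪z i - zs i, ∑ j, A i j • (lam j - lams j)⟫) := by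
        refine Finset.sum_congr rfl fun i _ => ?_
        rw [hΛ, hZ, real_inner_comm (-g i + lam i)]
        simp only [inner_add_left, inner_neg_left, inner_sub_left, inner_add_right,
          inner_neg_right, inner_sub_right]
        ring
    _ = _ := by
        simp only [Finset.sum_add_distrib, Finset.sum_sub_distrib]
        rw [hcross]
        ring

end SmulSums

theorem zero_dissipation_set_characterization_general
    (n m : ℕ)
    (f : Fin n → EuclideanSpace ℝ (Fin m) → ℝ)
    (hdiff : ∀ i, Differentiable ℝ (f i))
    (hsconv : ∀ i, StrictConvexOn ℝ Set.univ (f i))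
    (Ω : Fin n → Set (EuclideanSpace ℝ (Fin m)))
    (d : Fin n → EuclideanSpace ℝ (Fin m))
    (Lbar : Matrix (Fin n) (Fin n) ℝ) (hpsd : Lbar.PosSemidef)
    -- the equilibrium point S* = (X*, Λ*, Z*)
    (xs lams zs : Fin n → EuclideanSpace ℝ (Fin m))
    (heq_nc : ∀ i, ∀ y ∈ Ω i, ⟪lams i - gradient (f i) (xs i), y - xs i⟫ ≤ 0)
    (heq_lam : ∀ i, ∑ j, Lbar i j • (lams j + zs j) = d i - xs i)
    (heq_z : ∀ i, ∑ j, Lbar i j • lams j = 0)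
    -- a triple S = (X, Λ, Z) with xᵢ ∈ Ωᵢ and zero dissipation
    (x lam z : Fin n → EuclideanSpace ℝ (Fin m))
    (hx_mem : ∀ i, x i ∈ Ω i)
    (hzero : ∑ i, (⟪x i - xs i, -gradient (f i) (x i) + lam i⟫
        + ⟪lam i - lams i, d i - x i - ∑ j, Lbar i j • (lam j + z j)⟫
        + ⟪z i - zs i, ∑ j, Lbar i j • lam j⟫) = 0) :
    (∀ i, x i = xs i) ∧ ∀ i, ∑ j, Lbar i j • (lam j - lams j) = 0 := by
  set mono : Fin n → ℝ := fun i => ⟪gradient (f i) (x i) - gradient (f i) (xs i), x i - xs i⟫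
  have hmono_pos : ∀ i, x i ≠ xs i → 0 < mono i := fun i hne =>
    (hsconv i).inner_gradient_sub_gradient_pos (Set.mem_univ _) (Set.mem_univ _) hne
      (hdiff i _) (hdiff i _)
  have hmono_nonneg : ∀ i, 0 ≤ mono i := fun i => by
    by_cases h : x i = xs i
    · simp [mono, h]
    · exact (hmono_pos i h).le
  have hvi : ∑ i, ⟪lams i - gradient (f i) (xs i), x i - xs i⟫ ≤ 0 :=
    Finset.sum_nonpos fun i _ => heq_nc i (x i) (hx_mem i)
  have hquad := hpsd.sum_inner_sum_smul_nonneg_s7 fun i => lam i - lams i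
  have hsplit : ∀ i, ⟪lams i - gradient (f i) (x i), x i - xs i⟫
      = ⟪lams i - gradient (f i) (xs i), x i - xs i⟫ - mono i := fun i => by
    simp only [mono, inner_sub_left]
    ring
  rw [dissipation_eq_of_equilibrium hpsd.isHermitian heq_lam heq_z, Finset.sum_congr rfl
    fun i _ => hsplit i, Finset.sum_sub_distrib] at hzero
  have hmono_sum_nonneg : 0 ≤ ∑ i, mono i := Finset.sum_nonneg fun i _ => hmono_nonneg i
  have hmono_sum : ∑ i, mono i = 0 := by linarith
  refine ⟨fun i => ?_, hpsd.sum_smul_eq_zero_of_sum_inner_sum_smul_eq_zero (by linarith)⟩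
  by_contra hne
  exact (hmono_pos i hne).ne' <|
    (Finset.sum_eq_zero_iff_of_nonneg fun i _ => hmono_nonneg i).mp hmono_sum i (Finset.mem_univ i)

/-- **Characterization of the zero-dissipation set** (LaSalle invariance step, Lemma 1).
Assume each `fᵢ` is strictly convex and differentiable and `L̄` is symmetric positive
semidefinite.  If `S* = (X*,Λ*,Z*)` is an equilibrium point, `S = (X,Λ,Z)` has `xᵢ ∈ Ωᵢ`,
and `⟨S - S*, J(S)⟩ = 0` (written out blockwise), then `xᵢ = x*ᵢ` for all `i` and
`∑ⱼ L̄ᵢⱼ (λⱼ - λ*ⱼ) = 0` for all `i`. -/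
theorem zero_dissipation_set_characterization
    (n m : ℕ) (hn : 0 < n)
    (f : Fin n → EuclideanSpace ℝ (Fin m) → ℝ)
    (hdiff : ∀ i, Differentiable ℝ (f i))
    (hsconv : ∀ i, StrictConvexOn ℝ Set.univ (f i))
    (Ω : Fin n → Set (EuclideanSpace ℝ (Fin m)))
    (hΩne : ∀ i, (Ω i).Nonempty) (hΩcl : ∀ i, IsClosed (Ω i))
    (hΩconv : ∀ i, Convex ℝ (Ω i))
    (d : Fin n → EuclideanSpace ℝ (Fin m))
    (Lbar : Matrix (Fin n) (Fin n) ℝ) (hpsd : Lbar.PosSemidef)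
    -- the equilibrium point S* = (X*, Λ*, Z*)
    (xs lams zs : Fin n → EuclideanSpace ℝ (Fin m))
    (heq_mem : ∀ i, xs i ∈ Ω i)
    (heq_nc : ∀ i, ∀ y ∈ Ω i, ⟪lams i - gradient (f i) (xs i), y - xs i⟫ ≤ 0)
    (heq_lam : ∀ i, ∑ j, Lbar i j • (lams j + zs j) = d i - xs i)
    (heq_z : ∀ i, ∑ j, Lbar i j • lams j = 0)
    -- a triple S = (X, Λ, Z) with xᵢ ∈ Ωᵢ and zero dissipation
    (x lam z : Fin n → EuclideanSpace ℝ (Fin m))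
    (hx_mem : ∀ i, x i ∈ Ω i)
    (hzero : ∑ i, (⟪x i - xs i, -gradient (f i) (x i) + lam i⟫
        + ⟪lam i - lams i, d i - x i - ∑ j, Lbar i j • (lam j + z j)⟫
        + ⟪z i - zs i, ∑ j, Lbar i j • lam j⟫) = 0) :
    (∀ i, x i = xs i) ∧ ∀ i, ∑ j, Lbar i j • (lam j - lams j) = 0 :=
  zero_dissipation_set_characterization_general n m f hdiff hsconv Ω d Lbar hpsd xs lams zs heq_nc
    heq_lam heq_z x lam z hx_mem hzero
end
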